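/- Let G be a finite group, H ≤ M ≤ G subgroups such that H contains a Sylow p-subgroup S of G with N_G(S) ≤ M. If H is pronormal in M, then H is pronormal in G. -/

import Mathlib

/-- The conjugate subgroup `H^g = g H g⁻¹` (conjugation by `g`). -/
def conjSub {G : Type*} [Group G] (g : G) (H : Subgroup G) : Subgroup G :=
  H.map (MulAut.conj g).toMonoidHom

/-- A subgroup `H` of `G` is pronormal in `G` if for every `g ∈ G` the subgroups `H` and
`H^g` are conjugate by an element of `⟨H, H^g⟩`. -/
def IsPronormal {G : Type*} [Group G] (H : Subgroup G) : Prop :=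
  ∀ g : G, ∃ x ∈ H ⊔ conjSub g H, conjSub x H = conjSub g H

/-!
Frattini argument: for `g ∈ G` put `L = ⟨H, H^g⟩`. Both `S` and `S^g` are Sylow subgroups
of `L`, so `S^{lg} = S` for some `l ∈ L`; hence `lg ∈ N_G(S) ≤ M`. Pronormality of `H` in `M`
conjugates `H` onto `H^{lg}` by some `x ∈ ⟨H, H^{lg}⟩ ≤ L`, and then `l⁻¹x ∈ L` conjugates `H`
onto `H^g`.
-/

open Pointwise

section conjSub

variable {G : Type*} [Group G]

lemma conjSub_eq_smul (g : G) (H : Subgroup G) : conjSub g H = MulAut.conj g • H := rfl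

lemma conjSub_one (H : Subgroup G) : conjSub 1 H = H := by
  rw [conjSub_eq_smul, map_one, one_smul]

lemma conjSub_mul (a b : G) (H : Subgroup G) :
    conjSub (a * b) H = conjSub a (conjSub b H) := by
  simp only [conjSub_eq_smul, map_mul, mul_smul]

lemma conjSub_mono (g : G) {H K : Subgroup G} (h : H ≤ K) : conjSub g H ≤ conjSub g K :=
  Subgroup.map_mono h

lemma sup_conjSub_mul_le {H : Subgroup G} {g l : G} (hl : l ∈ H ⊔ conjSub g H) :
    H ⊔ conjSub (l * g) H ≤ H ⊔ conjSub g H := by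
  rw [conjSub_mul]
  exact sup_le le_sup_left (Subgroup.conj_smul_le_of_le le_sup_right ⟨l, hl⟩)

end conjSub

lemma IsPronormal.exists_conjSub_eq_of_subgroupOf {G : Type*} [Group G] {H M : Subgroup G}
    (hHM : H ≤ M) (h : IsPronormal (H.subgroupOf M)) {m : G} (hm : m ∈ M) :
    ∃ x ∈ H ⊔ conjSub m H, conjSub x H = conjSub m H := by
  obtain ⟨x, hx, hxm⟩ := h ⟨m, hm⟩
  have hconj (y : M) : conjSub y (H.subgroupOf M) = (conjSub (y : G) H).subgroupOf M :=
    Subgroup.conj_smul_subgroupOf hHM y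
  have hle (y : M) : conjSub (y : G) H ≤ M := Subgroup.conj_smul_le_of_le hHM y
  rw [hconj, hconj, Subgroup.subgroupOf_inj, inf_of_le_left (hle x),
    inf_of_le_left (hle ⟨m, hm⟩)] at hxm
  rw [hconj, ← Subgroup.subgroupOf_sup hHM (hle _)] at hx
  exact ⟨x, hx, hxm⟩

lemma Sylow.exists_mem_mul_mem_normalizer {G : Type*} [Group G] [Finite G] {p : ℕ}
    [Fact p.Prime] (P : Sylow p G) {L : Subgroup G} {g : G} (hP : (P : Subgroup G) ≤ L)
    (hgP : ((g • P : Sylow p G) : Subgroup G) ≤ L) :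
    ∃ l ∈ L, l * g ∈ Subgroup.normalizer ((P : Subgroup G) : Set G) := by
  obtain ⟨l, hl⟩ := MulAction.exists_smul_eq L ((g • P).subtype hgP) (P.subtype hP)
  rw [Sylow.smul_subtype] at hl
  refine ⟨l, l.2, Sylow.smul_eq_iff_mem_normalizer.mp ?_⟩
  rw [mul_smul]
  exact Sylow.subtype_injective hl

/-- Let `H ≤ M ≤ G` with `H` containing a Sylow `p`-subgroup `S` of `G`
such that `N_G(S) ≤ M`. If `H` is pronormal in `M`, then `H` is pronormal in `G`. -/
theorem stmt10 {G : Type*} [Group G] [Finite G] {p : ℕ} [Fact p.Prime]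
    (H M : Subgroup G) (hHM : H ≤ M) (S : Sylow p G) (hS : (S : Subgroup G) ≤ H)
    (hN : Subgroup.normalizer ((S : Subgroup G) : Set G) ≤ M)
    (h : IsPronormal (H.subgroupOf M)) : IsPronormal H := by
  intro g
  obtain ⟨l, hl, hlg⟩ :=
    S.exists_mem_mul_mem_normalizer (hS.trans le_sup_left) ((conjSub_mono g hS).trans le_sup_right)
  obtain ⟨x, hx, hxH⟩ := h.exists_conjSub_eq_of_subgroupOf hHM (hN hlg)
  refine ⟨l⁻¹ * x, mul_mem (inv_mem hl) (sup_conjSub_mul_le hl hx), ?_⟩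
  rw [conjSub_mul, hxH, conjSub_mul, ← conjSub_mul, inv_mul_cancel, conjSub_one]
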